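/- There exists a sequence of functions G₀, G₁, G₂, … each holomorphic on the open right half-plane {Re z > 0}, such that G₀(z) = z for all Re z > 0, G₁(z) = Γ(z) for all Re z > 0, Gₙ(1) = 1 for every n ≥ 0, and Gₙ(z)·G_{n+1}(z) = G_{n+1}(z + 1) for every n ≥ 0 and every z with Re z > 0. -/

import Mathlib

/-!
Write `Gₙ = exp ∘ Tₙ`. The recursion becomes the difference equation
`T (n + 1) (z + 1) = T (n + 1) z + T n z`, where `T 1 = M` is a holomorphic logarithm of `Γ` on the
half-plane and `T 0 = M (· + 1) - M` has derivative `1 / z`.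

Call `f` admissible if some iterated derivative `g = f⁽ᵐ⁾` satisfies
`‖g⁽ⁱ⁾ z‖ ≤ Cᵢ / (Re z) ^ (i + 2)` on `Re z ≥ 1` for every `i`. An admissible `f` has an admissible
antidifference: `-∑_{j ≥ 0} g (z + j)` is an antidifference of `g` whose derivative decays in the
same way, and integrating it `m` times (primitives exist on the half-plane, via the Cayley
transform), correcting by a linear term at each step, gives one of `f`. Iterating yields towers
`A` over `T 0` and `B` over the constant `1`. Then `E = M - A 1` is `1`-periodic, so
`T (n + 1) = A (n + 1) + B n * E` solves the recursion; normalizing every antidifference to vanish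
at `1` gives `Gₙ 1 = 1`.
-/

open Complex Set Filter

notation "ℍᵣ" => Set.ofPred fun z : ℂ => 0 < Complex.re z

lemma isPreconnected_rightHalfPlane : IsPreconnected ℍᵣ :=
  (convex_halfSpace_re_gt 0).isPreconnected

lemma one_mem_rightHalfPlane : (1 : ℂ) ∈ ℍᵣ := by simp

lemma add_one_mem_rightHalfPlane {z : ℂ} (hz : z ∈ ℍᵣ) : z + 1 ∈ ℍᵣ := by
  simp only [Set.mem_ofPred_eq, add_re, one_re] at hz ⊢; linarith

lemma DifferentiableOn.comp_add_of_nonneg_re {g : ℂ → ℂ} (hd : DifferentiableOn ℂ g ℍᵣ) {c : ℂ}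
    (hc : 0 ≤ c.re) : DifferentiableOn ℂ (fun z => g (z + c)) ℍᵣ :=
  hd.comp (by fun_prop) fun z (hz : 0 < z.re) => show 0 < (z + c).re by simp; linarith

lemma DifferentiableOn.iteratedDeriv_of_isOpen {f : ℂ → ℂ} {s : Set ℂ}
    (hf : DifferentiableOn ℂ f s) (hs : IsOpen s) (n : ℕ) :
    DifferentiableOn ℂ (iteratedDeriv n f) s := by
  rw [iteratedDeriv_eq_iterate]
  exact ((hf.analyticOnNhd hs).iterated_deriv n).differentiableOn

lemma iteratedDeriv_add_eq_iteratedDeriv_iteratedDeriv (m n : ℕ) (f : ℂ → ℂ) :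
    iteratedDeriv (m + n) f = iteratedDeriv n (iteratedDeriv m f) := by
  simp only [iteratedDeriv_eq_iterate, add_comm m, Function.iterate_add_apply]

lemma iteratedDeriv_add_const {n : ℕ} (hn : 0 < n) (f : ℂ → ℂ) (c x : ℂ) :
    iteratedDeriv n (fun z => f z + c) x = iteratedDeriv n f x := by
  simpa only [add_comm c] using iteratedDeriv_const_add hn c (f := f) (x := x)

lemma add_one_ne_zero_of_re_pos {z : ℂ} (hz : 0 < z.re) : z + 1 ≠ 0 := by
  intro h; have := congrArg re h; simp at this; linarith

lemma norm_sub_one_div_add_one_lt_one {z : ℂ} (hz : 0 < z.re) : ‖(z - 1) / (z + 1)‖ < 1 := by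
  have h : 0 < ‖z + 1‖ := norm_pos_iff.mpr (add_one_ne_zero_of_re_pos hz)
  rw [norm_div, div_lt_one h, ← sq_lt_sq₀ (norm_nonneg _) h.le, Complex.sq_norm, Complex.sq_norm]
  simp only [normSq_apply, sub_re, add_re, sub_im, add_im, one_re, one_im]
  nlinarith

lemma one_sub_ne_zero_of_norm_lt_one {w : ℂ} (hw : ‖w‖ < 1) : 1 - w ≠ 0 :=
  sub_ne_zero.mpr fun h => by rw [← h] at hw; simp at hw

lemma re_one_add_div_one_sub_pos {w : ℂ} (hw : ‖w‖ < 1) : 0 < ((1 + w) / (1 - w)).re := by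
  have hw2 : w.re * w.re + w.im * w.im < 1 := by
    rw [← normSq_apply, normSq_eq_norm_sq]; nlinarith [norm_nonneg w]
  rw [div_re, ← add_div]
  apply div_pos _ (normSq_pos.mpr (one_sub_ne_zero_of_norm_lt_one hw))
  simp only [add_re, sub_re, add_im, sub_im, one_re, one_im]
  nlinarith

/-- Morera's theorem on the unit disc (`DifferentiableOn.isExactOn_ball`), transported through
the Cayley transform `w ↦ (1 + w) / (1 - w)`. -/
theorem DifferentiableOn.isExactOn_rightHalfPlane {f : ℂ → ℂ} (hf : DifferentiableOn ℂ f ℍᵣ) :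
    IsExactOn f ℍᵣ := by
  set g : ℂ → ℂ := fun w => f ((1 + w) / (1 - w)) * (2 / (1 - w) ^ 2)
  have hg : DifferentiableOn ℂ g (Metric.ball 0 1) := by
    intro w hw
    have hw' : ‖w‖ < 1 := by simpa using hw
    have hfw := hf.differentiableAt ((isOpen_re_gt 0).mem_nhds (re_one_add_div_one_sub_pos hw'))
    have h1 := one_sub_ne_zero_of_norm_lt_one hw'
    exact (DifferentiableAt.mul (hfw.comp w (by fun_prop (disch := assumption)))
      (by fun_prop (disch := simp [h1]))).differentiableWithinAt
  obtain ⟨G, hG⟩ := hg.isExactOn_ball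
  refine ⟨fun z => G ((z - 1) / (z + 1)), fun z (hz : 0 < z.re) => ?_⟩
  have hz1 := add_one_ne_zero_of_re_pos hz
  have hφ : HasDerivAt (fun z : ℂ => (z - 1) / (z + 1)) (2 / (z + 1) ^ 2) z :=
    (((hasDerivAt_id' z).sub_const 1).div ((hasDerivAt_id' z).add_const 1) hz1).congr_deriv
      (by ring)
  refine ((hG _ (by simpa using norm_sub_one_div_add_one_lt_one hz)).comp z hφ).congr_deriv ?_
  have h2 : 1 - (z - 1) / (z + 1) = 2 / (z + 1) := by field_simp; ring
  simp only [g, h2, show (1 + (z - 1) / (z + 1)) / (2 / (z + 1)) = z by field_simp; ring]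
  field_simp

lemma exists_cexp_eqOn_of_ne_zero {f : ℂ → ℂ} (hf : DifferentiableOn ℂ f ℍᵣ)
    (hf₀ : ∀ z ∈ ℍᵣ, f z ≠ 0) :
    ∃ M : ℂ → ℂ, DifferentiableOn ℂ M ℍᵣ ∧ ∀ z ∈ ℍᵣ, exp (M z) = f z := by
  obtain ⟨L, hL⟩ := ((hf.deriv (isOpen_re_gt 0)).div hf hf₀).isExactOn_rightHalfPlane
  have hLd : DifferentiableOn ℂ L ℍᵣ := fun z hz =>
    (hL z hz).differentiableAt.differentiableWithinAt
  obtain ⟨a, ha⟩ : ∃ a, ∀ z ∈ ℍᵣ, f z * exp (-L z) = a := by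
    refine (isOpen_re_gt 0).exists_is_const_of_deriv_eq_zero isPreconnected_rightHalfPlane
      (hf.mul hLd.neg.cexp) fun z hz => ?_
    have hfz := (hf.differentiableAt ((isOpen_re_gt 0).mem_nhds hz)).hasDerivAt
    rw [(hfz.fun_mul (hL z hz).fun_neg.cexp).deriv]
    simp only [Pi.div_apply, Pi.zero_apply]
    field_simp [hf₀ z hz]
    ring
  have ha₀ : a ≠ 0 := ha 1 one_mem_rightHalfPlane ▸
    mul_ne_zero (hf₀ 1 one_mem_rightHalfPlane) (exp_ne_zero _)
  refine ⟨fun z => L z + log a, hLd.add_const _, fun z hz => ?_⟩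
  rw [exp_add, exp_log ha₀, ← ha z hz, mul_left_comm, ← exp_add, add_neg_cancel, exp_zero,
    mul_one]

lemma deriv_eqOn_inv_of_cexp_eqOn {u : ℂ → ℂ} {U : Set ℂ} (hU : IsOpen U)
    (hu : DifferentiableOn ℂ u U) (h : ∀ z ∈ U, exp (u z) = z) : EqOn (deriv u) (·⁻¹) U := by
  intro z hz
  have h₁ := (hu.differentiableAt (hU.mem_nhds hz)).hasDerivAt.cexp
  have h₂ : HasDerivAt (fun w => exp (u w)) 1 z :=
    (hasDerivAt_id z).congr_of_eventuallyEq (eventually_of_mem (hU.mem_nhds hz) h)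
  rw [h z hz] at h₁
  exact eq_inv_of_mul_eq_one_right (h₁.unique h₂)

lemma exists_antidifference_of_deriv {f g : ℂ → ℂ} (hf : DifferentiableOn ℂ f ℍᵣ)
    (hg : DifferentiableOn ℂ g ℍᵣ) (hΔ : ∀ z ∈ ℍᵣ, g (z + 1) = g z + deriv f z) :
    ∃ F, DifferentiableOn ℂ F ℍᵣ ∧ (∀ z ∈ ℍᵣ, F (z + 1) = F z + f z) ∧
      ∃ c, EqOn (deriv F) (fun z => g z + c) ℍᵣ := by
  obtain ⟨P, hP⟩ := hg.isExactOn_rightHalfPlane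
  have hPd : DifferentiableOn ℂ P ℍᵣ := fun z hz =>
    (hP z hz).differentiableAt.differentiableWithinAt
  obtain ⟨a, ha⟩ : ∃ a, EqOn (fun z => P (z + 1) - P z) (fun z => f z + a) ℍᵣ := by
    refine (isOpen_re_gt 0).exists_eq_add_of_deriv_eq isPreconnected_rightHalfPlane
      ((hPd.comp_add_of_nonneg_re (by simp)).sub hPd) hf fun z hz => ?_
    rw [((hP _ (add_one_mem_rightHalfPlane hz)).comp_add_const z 1).fun_sub (hP z hz) |>.deriv,
      hΔ z hz]
    ring
  refine ⟨fun z => P z - a * z, hPd.sub (by fun_prop), fun z hz => ?_, -a, fun z hz => ?_⟩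
  · linear_combination ha hz
  · rw [((hP z hz).fun_sub ((hasDerivAt_id' z).const_mul a)).deriv]
    ring

lemma exists_antidifference_of_iteratedDeriv (m : ℕ) {f h : ℂ → ℂ}
    (hf : DifferentiableOn ℂ f ℍᵣ) (hh : DifferentiableOn ℂ h ℍᵣ)
    (hΔ : ∀ z ∈ ℍᵣ, h (z + 1) = h z + iteratedDeriv m f z) :
    ∃ F, DifferentiableOn ℂ F ℍᵣ ∧ (∀ z ∈ ℍᵣ, F (z + 1) = F z + f z) ∧
      EqOn (iteratedDeriv (m + 1) F) (deriv h) ℍᵣ := by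
  induction m generalizing f with
  | zero => exact ⟨h, hh, by simpa using hΔ, by simp [EqOn]⟩
  | succ m ih =>
    simp only [iteratedDeriv_succ'] at hΔ
    obtain ⟨F₁, hF₁, hΔF₁, hF₁h⟩ := ih (hf.deriv (isOpen_re_gt 0)) hΔ
    obtain ⟨F, hF, hΔF, c, hFc⟩ := exists_antidifference_of_deriv hf hF₁ hΔF₁
    refine ⟨F, hF, hΔF, fun z hz => ?_⟩
    rw [iteratedDeriv_succ', hFc.iteratedDeriv_of_isOpen (isOpen_re_gt 0) _ hz, ← hF₁h hz,
      iteratedDeriv_add_const m.succ_pos]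

lemma one_div_add_pow_le {x : ℝ} (hx : 0 < x) (k j : ℕ) :
    1 / (x + (j + 1)) ^ (k + 2) ≤ (1 / (x + j) - 1 / (x + (j + 1))) / x ^ k := by
  have hj : (0 : ℝ) ≤ j := j.cast_nonneg
  have hxj : 0 < x + j := by positivity
  rw [div_sub_div _ _ hxj.ne' (by positivity), div_div,
    div_le_div_iff₀ (by positivity) (by positivity)]
  have hk : x ^ k ≤ (x + (j + 1)) ^ k := pow_le_pow_left₀ hx.le (by linarith) k
  have h2 : (x + j) * (x + (j + 1)) ≤ (x + (j + 1)) ^ 2 := by nlinarith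
  calc 1 * ((x + j) * (x + (j + 1)) * x ^ k) ≤ (x + (j + 1)) ^ 2 * (x + (j + 1)) ^ k := by
        rw [one_mul]; exact mul_le_mul h2 hk (by positivity) (by positivity)
    _ = (1 * (x + (j + 1)) - (x + j) * 1) * (x + (j + 1)) ^ (k + 2) := by ring

lemma summable_one_div_add_pow {x : ℝ} (hx : 0 ≤ x) (k : ℕ) :
    Summable fun j : ℕ => 1 / (x + (j + 1)) ^ (k + 2) := by
  refine Summable.of_nonneg_of_le (fun j => by positivity) (fun j => ?_)
    ((summable_nat_add_iff 1).mpr (Real.summable_one_div_nat_pow.mpr (by omega : 1 < k + 2)))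
  push_cast
  exact one_div_le_one_div_of_le (by positivity) (pow_le_pow_left₀ (by positivity) (by linarith) _)

lemma tsum_one_div_add_pow_le {x : ℝ} (hx : 0 < x) (k : ℕ) :
    ∑' j : ℕ, 1 / (x + (j + 1)) ^ (k + 2) ≤ 1 / x ^ (k + 1) := by
  refine Real.tsum_le_of_sum_range_le (fun j => by positivity) fun n => ?_
  calc ∑ j ∈ Finset.range n, 1 / (x + (j + 1)) ^ (k + 2)
      ≤ ∑ j ∈ Finset.range n, (1 / (x + j) - 1 / (x + (j + 1))) / x ^ k :=
        Finset.sum_le_sum fun j _ => one_div_add_pow_le hx k j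
    _ = (1 / x - 1 / (x + n)) / x ^ k := by
        have := Finset.sum_range_sub' (fun j : ℕ => 1 / (x + j)) n
        push_cast at this
        rw [← Finset.sum_div, this, add_zero]
    _ ≤ 1 / x ^ (k + 1) := by
        rw [pow_succ', ← div_div]
        gcongr
        have : 0 < x + n := by positivity
        simp only [sub_le_self_iff]; positivity

noncomputable def shiftSum (g : ℂ → ℂ) (z : ℂ) : ℂ := ∑' j : ℕ, g (z + (j + 1))

section shiftSum

variable {g : ℂ → ℂ} {C : ℝ} {k : ℕ}

lemma nonneg_of_forall_norm_le (hg : ∀ w : ℂ, 1 ≤ w.re → ‖g w‖ ≤ C / w.re ^ k) : 0 ≤ C :=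
  (norm_nonneg _).trans (by simpa using hg 1 (by simp))

lemma norm_apply_add_succ_le (hg : ∀ w : ℂ, 1 ≤ w.re → ‖g w‖ ≤ C / w.re ^ k) {x : ℝ}
    (hx : 0 ≤ x) {z : ℂ} (hz : x ≤ z.re) (j : ℕ) :
    ‖g (z + (j + 1))‖ ≤ C * (1 / (x + (j + 1)) ^ k) := by
  have hj : (0 : ℝ) ≤ j := j.cast_nonneg
  have hC := nonneg_of_forall_norm_le hg
  refine (hg _ (by simp; linarith)).trans ?_
  rw [← mul_one_div]
  gcongr
  simpa using hz

lemma summable_apply_add_succ (hg : ∀ w : ℂ, 1 ≤ w.re → ‖g w‖ ≤ C / w.re ^ (k + 2)) {z : ℂ}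
    (hz : 0 ≤ z.re) : Summable fun j : ℕ => g (z + (j + 1)) :=
  .of_norm_bounded ((summable_one_div_add_pow le_rfl k).mul_left C)
    (norm_apply_add_succ_le hg le_rfl hz)

lemma shiftSum_eq_add (hg : ∀ w : ℂ, 1 ≤ w.re → ‖g w‖ ≤ C / w.re ^ (k + 2)) {z : ℂ}
    (hz : 0 ≤ z.re) : shiftSum g z = g (z + 1) + shiftSum g (z + 1) := by
  rw [shiftSum, (summable_apply_add_succ hg hz).tsum_eq_zero_add, shiftSum]
  push_cast
  simp only [zero_add, add_assoc, add_comm (1 : ℂ)]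

lemma norm_shiftSum_le (hg : ∀ w : ℂ, 1 ≤ w.re → ‖g w‖ ≤ C / w.re ^ (k + 2)) {z : ℂ}
    (hz : 0 < z.re) : ‖shiftSum g z‖ ≤ C / z.re ^ (k + 1) := by
  have hC := nonneg_of_forall_norm_le hg
  calc ‖shiftSum g z‖ ≤ ∑' j : ℕ, C * (1 / (z.re + (j + 1)) ^ (k + 2)) :=
        tsum_of_norm_bounded ((summable_one_div_add_pow hz.le k).mul_left C).hasSum
          (norm_apply_add_succ_le hg hz.le le_rfl)
    _ ≤ C * (1 / z.re ^ (k + 1)) := by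
        rw [tsum_mul_left]; gcongr; exact tsum_one_div_add_pow_le hz k
    _ = C / z.re ^ (k + 1) := mul_one_div C _

lemma differentiableOn_shiftSum (hd : DifferentiableOn ℂ g ℍᵣ)
    (hg : ∀ w : ℂ, 1 ≤ w.re → ‖g w‖ ≤ C / w.re ^ (k + 2)) :
    DifferentiableOn ℂ (shiftSum g) ℍᵣ :=
  differentiableOn_tsum_of_summable_norm ((summable_one_div_add_pow le_rfl k).mul_left C)
    (fun j => hd.comp_add_of_nonneg_re (by simp; positivity)) (isOpen_re_gt 0)
    fun j z hz => norm_apply_add_succ_le hg le_rfl (le_of_lt hz) j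

lemma deriv_shiftSum (hd : DifferentiableOn ℂ g ℍᵣ)
    (hg : ∀ w : ℂ, 1 ≤ w.re → ‖g w‖ ≤ C / w.re ^ (k + 2)) {z : ℂ} (hz : z ∈ ℍᵣ) :
    deriv (shiftSum g) z = shiftSum (deriv g) z := by
  have := hasSum_deriv_of_summable_norm (F := fun (j : ℕ) w => g (w + (j + 1)))
    ((summable_one_div_add_pow le_rfl k).mul_left C)
    (fun j => hd.comp_add_of_nonneg_re (by simp; positivity)) (isOpen_re_gt 0)
    (fun j z hz => norm_apply_add_succ_le hg le_rfl (le_of_lt hz) j) hz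
  simp only [deriv_comp_add_const] at this
  exact this.tsum_eq.symm

end shiftSum

/-- The exponent `i + 2` is what the antidifference preserves: summing over the shifts `z + j`
loses one power of `Re z`, and the extra derivative taken afterwards regains it. -/
def DerivsDecay (g : ℂ → ℂ) : Prop :=
  ∀ i : ℕ, ∃ C : ℝ, ∀ z : ℂ, 1 ≤ z.re → ‖iteratedDeriv i g z‖ ≤ C / z.re ^ (i + 2)

def HasDecayingIteratedDeriv (f : ℂ → ℂ) : Prop :=
  ∃ m : ℕ, DerivsDecay (iteratedDeriv m f)

lemma DerivsDecay.congr {g g' : ℂ → ℂ} (hg : DerivsDecay g) (h : EqOn g g' ℍᵣ) :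
    DerivsDecay g' := fun i => by
  obtain ⟨C, hC⟩ := hg i
  refine ⟨C, fun z hz => ?_⟩
  rw [← h.iteratedDeriv_of_isOpen (isOpen_re_gt 0) i (show 0 < z.re by linarith)]
  exact hC z hz

section DerivsDecay

variable {g : ℂ → ℂ}

lemma iteratedDeriv_shiftSum (hd : DifferentiableOn ℂ g ℍᵣ) (hg : DerivsDecay g) (i : ℕ) :
    EqOn (iteratedDeriv i (shiftSum g)) (shiftSum (iteratedDeriv i g)) ℍᵣ := by
  induction i with
  | zero => simp [EqOn]
  | succ i ih =>
    intro z hz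
    obtain ⟨C, hC⟩ := hg i
    rw [iteratedDeriv_succ, iteratedDeriv_succ,
      (eventuallyEq_of_mem ((isOpen_re_gt 0).mem_nhds hz) ih).deriv_eq,
      deriv_shiftSum (hd.iteratedDeriv_of_isOpen (isOpen_re_gt 0) i) hC hz]

/-- `-∑_{j ≥ 0} g (z + j)`, with the term `j = 0` split off so that the remaining series
converges uniformly on the whole half-plane. -/
noncomputable def antidiffSeries (g : ℂ → ℂ) (z : ℂ) : ℂ := -(g z + shiftSum g z)

lemma antidiffSeries_add_one (hg : DerivsDecay g) {z : ℂ} (hz : z ∈ ℍᵣ) :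
    antidiffSeries g (z + 1) = antidiffSeries g z + g z := by
  obtain ⟨C, hC⟩ := hg 0
  rw [antidiffSeries, antidiffSeries, shiftSum_eq_add (by simpa using hC) (le_of_lt hz)]
  ring

lemma differentiableOn_antidiffSeries (hd : DifferentiableOn ℂ g ℍᵣ) (hg : DerivsDecay g) :
    DifferentiableOn ℂ (antidiffSeries g) ℍᵣ :=
  have ⟨C, hC⟩ := hg 0
  (hd.add (differentiableOn_shiftSum hd (by simpa using hC))).neg

lemma iteratedDeriv_antidiffSeries (hd : DifferentiableOn ℂ g ℍᵣ) (hg : DerivsDecay g) (i : ℕ) :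
    EqOn (iteratedDeriv i (antidiffSeries g))
      (fun z => -(iteratedDeriv i g z + shiftSum (iteratedDeriv i g) z)) ℍᵣ := by
  intro z hz
  obtain ⟨C, hC⟩ := hg 0
  have hnhds := (isOpen_re_gt 0).mem_nhds hz
  unfold antidiffSeries
  rw [iteratedDeriv_fun_neg, iteratedDeriv_fun_add (hd.analyticAt hnhds).contDiffAt
    ((differentiableOn_shiftSum hd (by simpa using hC)).analyticAt hnhds).contDiffAt,
    iteratedDeriv_shiftSum hd hg i hz]

lemma derivsDecay_deriv_antidiffSeries (hd : DifferentiableOn ℂ g ℍᵣ) (hg : DerivsDecay g) :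
    DerivsDecay (deriv (antidiffSeries g)) := by
  intro i
  obtain ⟨C, hC⟩ := hg (i + 1)
  refine ⟨2 * C, fun z hz => ?_⟩
  have hx : 0 < z.re := by linarith
  rw [← iteratedDeriv_succ', iteratedDeriv_antidiffSeries hd hg (i + 1) hx, norm_neg]
  have hC₀ := nonneg_of_forall_norm_le hC
  calc _ ≤ C / z.re ^ (i + 1 + 2) + C / z.re ^ (i + 1 + 1) :=
        (norm_add_le _ _).trans (add_le_add (hC z hz) (norm_shiftSum_le hC hx))
    _ ≤ C / z.re ^ (i + 2) + C / z.re ^ (i + 2) := by gcongr; omega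
    _ = 2 * C / z.re ^ (i + 2) := by ring

end DerivsDecay

theorem exists_antidifference {f : ℂ → ℂ} (hf : DifferentiableOn ℂ f ℍᵣ)
    (hfd : HasDecayingIteratedDeriv f) :
    ∃ F, DifferentiableOn ℂ F ℍᵣ ∧ HasDecayingIteratedDeriv F ∧ F 1 = 0 ∧
      ∀ z ∈ ℍᵣ, F (z + 1) = F z + f z := by
  obtain ⟨m, hm⟩ := hfd
  have hg := hf.iteratedDeriv_of_isOpen (isOpen_re_gt 0) m
  obtain ⟨F, hF, hΔF, hFm⟩ := exists_antidifference_of_iteratedDeriv m hf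
    (differentiableOn_antidiffSeries hg hm) fun z hz => antidiffSeries_add_one hm hz
  refine ⟨fun z => F z - F 1, hF.sub_const _, ⟨m + 1, ?_⟩, sub_self _, fun z hz => ?_⟩
  · refine (derivsDecay_deriv_antidiffSeries hg hm).congr fun z hz => ?_
    simp only [← hFm hz, sub_eq_add_neg, iteratedDeriv_add_const m.succ_pos]
  · simp only [hΔF z hz]; ring

lemma exists_antidifference_tower {g : ℂ → ℂ} (hg : DifferentiableOn ℂ g ℍᵣ)
    (hgd : HasDecayingIteratedDeriv g) :
    ∃ A : ℕ → ℂ → ℂ, A 0 = g ∧ (∀ n, DifferentiableOn ℂ (A n) ℍᵣ) ∧ (∀ n, A (n + 1) 1 = 0) ∧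
      ∀ n, ∀ z ∈ ℍᵣ, A (n + 1) (z + 1) = A (n + 1) z + A n z := by
  let Good := {f : ℂ → ℂ // DifferentiableOn ℂ f ℍᵣ ∧ HasDecayingIteratedDeriv f}
  choose F hF hFd hF1 hΔF using fun f : Good => exists_antidifference f.2.1 f.2.2
  let A : ℕ → Good := fun n => Nat.rec ⟨g, hg, hgd⟩ (fun _ f => ⟨F f, hF f, hFd f⟩) n
  exact ⟨fun n => (A n).1, rfl, fun n => (A n).2.1, fun n => hF1 (A n), fun n => hΔF (A n)⟩

lemma hasDecayingIteratedDeriv_const (c : ℂ) : HasDecayingIteratedDeriv fun _ => c :=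
  ⟨1, fun i => ⟨0, fun z _ => by simp⟩⟩

lemma norm_iter_deriv_inv_le {z : ℂ} (hz : 0 < z.re) (n : ℕ) :
    ‖deriv^[n] (·⁻¹) z‖ ≤ n.factorial / z.re ^ (n + 1) := by
  rw [iter_deriv_inv, norm_mul, norm_mul, norm_pow, norm_neg, norm_one, one_pow, one_mul,
    Complex.norm_natCast, norm_zpow, show (-1 - (n : ℤ)) = -((n + 1 : ℕ) : ℤ) by push_cast; ring,
    zpow_neg, zpow_natCast, ← div_eq_mul_inv]
  gcongr
  exact re_le_norm z

lemma hasDecayingIteratedDeriv_of_deriv_eqOn_inv {f : ℂ → ℂ} (h : EqOn (deriv f) (·⁻¹) ℍᵣ) :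
    HasDecayingIteratedDeriv f := by
  refine ⟨2, DerivsDecay.congr (g := iteratedDeriv 1 (·⁻¹))
    (fun i => ⟨((i + 1).factorial : ℝ), fun z hz => ?_⟩) fun z hz => ?_⟩
  · rw [← iteratedDeriv_add_eq_iteratedDeriv_iteratedDeriv, iteratedDeriv_eq_iterate, add_comm]
    exact norm_iter_deriv_inv_le (by linarith) (i + 1)
  · exact (h.symm.iteratedDeriv_of_isOpen (isOpen_re_gt 0) 1 hz).trans
      (congrFun iteratedDeriv_succ' z).symm

lemma exists_tower_of_hasDecayingIteratedDeriv_sub {f : ℂ → ℂ} (hf : DifferentiableOn ℂ f ℍᵣ)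
    (hΔ : HasDecayingIteratedDeriv fun z => f (z + 1) - f z) :
    ∃ T : ℕ → ℂ → ℂ, T 0 = (fun z => f (z + 1) - f z) ∧ T 1 = f ∧
      (∀ n, DifferentiableOn ℂ (T n) ℍᵣ) ∧ (∀ n, T (n + 2) 1 = 0) ∧
      ∀ n, ∀ z ∈ ℍᵣ, T (n + 1) (z + 1) = T (n + 1) z + T n z := by
  obtain ⟨A, hA0, hA, hA1, hΔA⟩ := exists_antidifference_tower (g := fun z => f (z + 1) - f z)
    ((hf.comp_add_of_nonneg_re (by simp)).sub hf) hΔ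
  obtain ⟨B, hB0, hB, hB1, hΔB⟩ :=
    exists_antidifference_tower (differentiableOn_const 1) (hasDecayingIteratedDeriv_const 1)
  set E := fun z => f z - A 1 z
  have hE : ∀ z ∈ ℍᵣ, E (z + 1) = E z := fun z hz => by
    simp only [E, hΔA 0 z hz, hA0]; ring
  let T : ℕ → ℂ → ℂ := fun n => Nat.casesOn n (A 0) fun n z => A (n + 1) z + B n z * E z
  have hT : ∀ n, T (n + 1) = fun z => A (n + 1) z + B n z * E z := fun _ => rfl
  have hT1 : T 1 = f := by funext z; simp [T, hB0, E]
  refine ⟨T, hA0, hT1, ?_, fun n => ?_, ?_⟩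
  · rintro (_ | n)
    · exact hA 0
    · rw [hT]; exact (hA _).add ((hB n).mul (hf.sub (hA 1)))
  · rw [hT]; simp [hA1, hB1]
  · rintro (_ | n) z hz
    · show T 1 (z + 1) = T 1 z + A 0 z
      rw [hT1, hA0]; ring
    · rw [hT, hT]; simp only [hΔA (n + 1) z hz, hΔB n z hz, hE z hz]; ring

lemma ne_neg_natCast_of_re_pos {z : ℂ} (hz : 0 < z.re) (m : ℕ) : z ≠ -m := by
  rintro rfl; simp at hz; linarith [(m.cast_nonneg : (0 : ℝ) ≤ m)]

/-- The paper's tower of generalized Gamma functions: there is a sequence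
`G₀, G₁, G₂, …` of functions holomorphic on the right half-plane with `G₀(z) = z`,
`G₁(z) = Γ(z)`, `Gₙ(1) = 1`, and the recursion `Gₙ(z)·G_{n+1}(z) = G_{n+1}(z+1)`. -/
theorem stmt19 :
    ∃ G : ℕ → ℂ → ℂ,
      (∀ n : ℕ, DifferentiableOn ℂ (G n) {z : ℂ | 0 < z.re}) ∧
      (∀ z : ℂ, 0 < z.re → G 0 z = z) ∧
      (∀ z : ℂ, 0 < z.re → G 1 z = Complex.Gamma z) ∧
      (∀ n : ℕ, G n 1 = 1) ∧
      (∀ n : ℕ, ∀ z : ℂ, 0 < z.re → G n z * G (n + 1) z = G (n + 1) (z + 1)) := by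
  obtain ⟨M, hM, hMΓ⟩ := exists_cexp_eqOn_of_ne_zero
    (fun z hz => (differentiableAt_Gamma z (ne_neg_natCast_of_re_pos hz)).differentiableWithinAt)
    fun z hz => Gamma_ne_zero_of_re_pos hz
  have hΔM : ∀ z ∈ ℍᵣ, exp (M (z + 1) - M z) = z := fun z (hz : 0 < z.re) => by
    rw [exp_sub, hMΓ z hz, hMΓ (z + 1) (add_one_mem_rightHalfPlane hz),
      Gamma_add_one z (ne_of_apply_ne re hz.ne'),
      mul_div_cancel_right₀ _ (Gamma_ne_zero_of_re_pos hz)]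
  obtain ⟨T, hT0, hT1, hT, hT2, hΔT⟩ := exists_tower_of_hasDecayingIteratedDeriv_sub hM
    (hasDecayingIteratedDeriv_of_deriv_eqOn_inv (deriv_eqOn_inv_of_cexp_eqOn (isOpen_re_gt 0)
      ((hM.comp_add_of_nonneg_re (by simp)).sub hM) hΔM))
  refine ⟨fun n z => exp (T n z), fun n => (hT n).cexp, fun z hz => ?_, fun z hz => ?_,
    fun n => ?_, fun n z hz => ?_⟩ <;> dsimp only
  · rw [hT0]; exact hΔM z hz
  · rw [hT1]; exact hMΓ z hz
  · rcases n with _ | _ | n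
    · rw [hT0]; exact hΔM 1 one_mem_rightHalfPlane
    · rw [hT1, hMΓ 1 one_mem_rightHalfPlane, Gamma_one]
    · rw [hT2 n, exp_zero]
  · rw [← exp_add, hΔT n z hz, add_comm]
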